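/- Under the same assumptions, for any ψ ∈ K the vector ψ'' := (½(1-Γ)(1-E_π) + ½(1+Γ)(1-E_φ))ψ lies in i·L', where L' is the symplectic complement of L = (1+Γ)L_φ + (1-Γ)L_π. -/

import Mathlib

open scoped InnerProductSpace

/-! Writing `a = (1 - E_π)ψ ∈ L_πᗮ` and `b = (1 - E_φ)ψ ∈ L_φᗮ`, the claim says that
`Re ⟪(a - Γa) + (b + Γb), (f + Γf) + (g - Γg)⟫ = 0` for `f ∈ L_φ`, `g ∈ L_π`.
For an antiunitary involution `Γ`, `Γ`-antisymmetric vectors are real-orthogonal to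
`Γ`-symmetric ones, which kills the two diagonal terms; the cross terms vanish outright,
because the orthogonal complement of a `Γ`-invariant subspace is again `Γ`-invariant. -/

section AntiunitaryInvolution

variable {K : Type*} [NormedAddCommGroup K] [InnerProductSpace ℂ K] {Γ : K → K}

theorem inner_map_left_comm (hΓinv : ∀ x, Γ (Γ x) = x)
    (hΓinner : ∀ x y, ⟪Γ x, Γ y⟫_ℂ = ⟪y, x⟫_ℂ) (x y : K) :
    ⟪Γ x, y⟫_ℂ = ⟪Γ y, x⟫_ℂ := by
  conv_lhs => rw [← hΓinv y, hΓinner]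

theorem re_inner_sub_map_add_map (hΓinv : ∀ x, Γ (Γ x) = x)
    (hΓinner : ∀ x y, ⟪Γ x, Γ y⟫_ℂ = ⟪y, x⟫_ℂ) (x y : K) :
    (⟪x - Γ x, y + Γ y⟫_ℂ).re = 0 := by
  rw [inner_sub_left, inner_add_right, inner_add_right, hΓinner, ← inner_conj_symm x y,
    ← inner_conj_symm x (Γ y), inner_map_left_comm hΓinv hΓinner y x]
  simp only [Complex.add_re, Complex.sub_re, Complex.conj_re]
  ring

theorem map_mem_orthogonal (hΓinv : ∀ x, Γ (Γ x) = x)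
    (hΓinner : ∀ x y, ⟪Γ x, Γ y⟫_ℂ = ⟪y, x⟫_ℂ) {M : Submodule ℂ K}
    (hM : ∀ x ∈ M, Γ x ∈ M) {a : K} (ha : a ∈ Mᗮ) : Γ a ∈ Mᗮ := by
  intro m hm
  rw [← hΓinv m, hΓinner]
  exact M.inner_left_of_mem_orthogonal (hM m hm) ha

end AntiunitaryInvolution

theorem inner_neg_I_smul_comm_of_re_inner_eq_zero {K : Type*} [NormedAddCommGroup K]
    [InnerProductSpace ℂ K] {u ξ : K} (h : (⟪u, ξ⟫_ℂ).re = 0) :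
    ⟪(-Complex.I) • u, ξ⟫_ℂ = ⟪ξ, (-Complex.I) • u⟫_ℂ := by
  rw [inner_smul_left, inner_smul_right, ← inner_conj_symm ξ u]
  generalize ⟪u, ξ⟫_ℂ = z at h ⊢
  apply Complex.ext <;> simp [h]

theorem psi_doubleprime_mem_i_symplectic_complement_general
    {K : Type*} [NormedAddCommGroup K] [InnerProductSpace ℂ K]
    (Γ : K → K)
    (hΓinv : ∀ ψ, Γ (Γ ψ) = ψ)
    (hΓinner : ∀ ψ₁ ψ₂, ⟪Γ ψ₁, Γ ψ₂⟫_ℂ = ⟪ψ₂, ψ₁⟫_ℂ)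
    (Lφ Lπ : Submodule ℂ K) [Lφ.HasOrthogonalProjection] [Lπ.HasOrthogonalProjection]
    (hLφΓ : ∀ x ∈ Lφ, Γ x ∈ Lφ) (hLπΓ : ∀ x ∈ Lπ, Γ x ∈ Lπ)
    (L : Set K)
    (hL : L = {x | ∃ f ∈ Lφ, ∃ g ∈ Lπ, x = (f + Γ f) + (g - Γ g)})
    (ψ ψ'' : K)
    (hψ'' : ψ'' = (2⁻¹ : ℝ) •
      (((ψ - (Lπ.orthogonalProjectionOnto ψ : K)) - Γ (ψ - (Lπ.orthogonalProjectionOnto ψ : K))) +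
       ((ψ - (Lφ.orthogonalProjectionOnto ψ : K)) + Γ (ψ - (Lφ.orthogonalProjectionOnto ψ : K))))) :
    ∀ ξ ∈ L, ⟪(-Complex.I) • ψ'', ξ⟫_ℂ = ⟪ξ, (-Complex.I) • ψ''⟫_ℂ := by
  rw [hL]
  rintro _ ⟨f, hf, g, hg, rfl⟩
  apply inner_neg_I_smul_comm_of_re_inner_eq_zero
  set a := ψ - (Lπ.orthogonalProjectionOnto ψ : K)
  set b := ψ - (Lφ.orthogonalProjectionOnto ψ : K)
  have ha : a ∈ Lπᗮ := Lπ.sub_starProjection_mem_orthogonal ψ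
  have hb : b ∈ Lφᗮ := Lφ.sub_starProjection_mem_orthogonal ψ
  have hag : ⟪a - Γ a, g - Γ g⟫_ℂ = 0 :=
    Lπ.inner_left_of_mem_orthogonal (Lπ.sub_mem hg (hLπΓ g hg))
      (Lπᗮ.sub_mem ha (map_mem_orthogonal hΓinv hΓinner hLπΓ ha))
  have hbf : ⟪b + Γ b, f + Γ f⟫_ℂ = 0 :=
    Lφ.inner_left_of_mem_orthogonal (Lφ.add_mem hf (hLφΓ f hf))
      (Lφᗮ.add_mem hb (map_mem_orthogonal hΓinv hΓinner hLφΓ hb))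
  have haf := re_inner_sub_map_add_map hΓinv hΓinner a f
  have hbg := re_inner_sub_map_add_map hΓinv hΓinner g b
  rw [← inner_conj_symm, Complex.conj_re] at hbg
  rw [hψ'', RCLike.real_smul_eq_coe_smul (K := ℂ), inner_smul_real_left]
  rw [inner_add_left, inner_add_right (a - Γ a), inner_add_right (b + Γ b), hag, hbf]
  simp [haf, hbg]

/-- For closed complex `Γ`-invariant subspaces `L_φ, L_π` of `K` with orthogonal
projections `E_φ, E_π`, and `L = (1+Γ)L_φ + (1-Γ)L_π`, the vector
`ψ'' = (½(1-Γ)(1-E_π) + ½(1+Γ)(1-E_φ))ψ` lies in `i·L'`, where `L'` is the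
symplectic complement of `L`; equivalently `-i·ψ'' ∈ L'`. -/
theorem psi_doubleprime_mem_i_symplectic_complement
    {K : Type*} [NormedAddCommGroup K] [InnerProductSpace ℂ K] [CompleteSpace K]
    (Γ : K → K)
    (hΓinv : ∀ ψ, Γ (Γ ψ) = ψ)
    (hΓadd : ∀ ψ₁ ψ₂, Γ (ψ₁ + ψ₂) = Γ ψ₁ + Γ ψ₂)
    (hΓsmul : ∀ (c : ℂ) ψ, Γ (c • ψ) = (starRingEnd ℂ c) • Γ ψ)
    (hΓinner : ∀ ψ₁ ψ₂, ⟪Γ ψ₁, Γ ψ₂⟫_ℂ = ⟪ψ₂, ψ₁⟫_ℂ)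
    (Lφ Lπ : Submodule ℂ K) [Lφ.HasOrthogonalProjection] [Lπ.HasOrthogonalProjection]
    (hLφΓ : ∀ x ∈ Lφ, Γ x ∈ Lφ) (hLπΓ : ∀ x ∈ Lπ, Γ x ∈ Lπ)
    (L : Set K)
    (hL : L = {x | ∃ f ∈ Lφ, ∃ g ∈ Lπ, x = (f + Γ f) + (g - Γ g)})
    (ψ ψ'' : K)
    (hψ'' : ψ'' = (2⁻¹ : ℝ) •
      (((ψ - (Lπ.orthogonalProjectionOnto ψ : K)) - Γ (ψ - (Lπ.orthogonalProjectionOnto ψ : K))) +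
       ((ψ - (Lφ.orthogonalProjectionOnto ψ : K)) + Γ (ψ - (Lφ.orthogonalProjectionOnto ψ : K))))) :
    ∀ ξ ∈ L, ⟪(-Complex.I) • ψ'', ξ⟫_ℂ = ⟪ξ, (-Complex.I) • ψ''⟫_ℂ :=
  psi_doubleprime_mem_i_symplectic_complement_general Γ hΓinv hΓinner Lφ Lπ hLφΓ hLπΓ L hL ψ ψ''
    hψ''
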